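/- arXiv:math/0210262 — 4 statements merged into one kernel-verified Lean document; each statement's English description precedes it below -/
import Mathlib

section
/- The matrix M = [[3,0,1],[0,2,1],[1,1,1]] cannot be written as a finite product of non-negative elementary 3×3 matrices (i.e., matrices that are either permutation matrices or the identity plus a single off-diagonal entry equal to 1). -/
/-!
Rows of a matrix are compared in the pointwise order. Multiplying a non-negative matrix `N` on
the left by `1 + E_{ij}` adds row `j` of `N` to row `i`, so in the product row `i` dominates
row `j`; a permutation matrix only permutes rows. By induction, every product of non-negative
elementary matrices is therefore a permutation matrix or has a row dominating another one.
The matrix `[[3,0,1],[0,2,1],[1,1,1]]` is neither.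
-/

/-- A non-negative elementary 3×3 matrix: a permutation matrix or I + E_{ij} (i ≠ j). -/
def IsElem3 (M : Matrix (Fin 3) (Fin 3) ℤ) : Prop :=
  (∃ p : Equiv.Perm (Fin 3), M = Matrix.of fun i j => if p j = i then 1 else 0) ∨
  (∃ i j : Fin 3, i ≠ j ∧ M = 1 + Matrix.single i j 1)

open Equiv

namespace Matrix

variable {n R : Type*} [Fintype n]

lemma mul_apply_nonneg [Semiring R] [PartialOrder R] [IsOrderedRing R] {A B : Matrix n n R}
    (hA : ∀ i j, 0 ≤ A i j) (hB : ∀ i j, 0 ≤ B i j) (i j : n) : 0 ≤ (A * B) i j :=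
  Finset.sum_nonneg fun k _ => mul_nonneg (hA i k) (hB k j)

variable [DecidableEq n]

def IsNonnegElementary [NonAssocSemiring R] (A : Matrix n n R) : Prop :=
  (∃ p : Perm n, A = permMatrixHom p) ∨ ∃ i j : n, i ≠ j ∧ A = 1 + single i j 1

lemma permMatrixHom_apply_apply [NonAssocSemiring R] (p : Perm n) (i j : n) :
    (permMatrixHom p : Matrix n n R) i j = if p j = i then 1 else 0 := by
  simp [PEquiv.toMatrix_apply, Equiv.toPEquiv_apply, eq_comm, Equiv.eq_symm_apply]

lemma permMatrixHom_mul_row [NonAssocSemiring R] (p : Perm n) (N : Matrix n n R) (i : n) :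
    (permMatrixHom p * N : Matrix n n R) i = N (p⁻¹ i) := by
  rw [permMatrixHom_apply, PEquiv.toMatrix_toPEquiv_mul]
  rfl

lemma one_add_single_mul_row_self [Semiring R] (i j : n) (N : Matrix n n R) :
    ((1 + single i j 1) * N : Matrix n n R) i = N i + N j := by
  ext k
  simp [add_mul]

lemma one_add_single_mul_row_of_ne [Semiring R] {i j k : n} (hk : k ≠ i) (N : Matrix n n R) :
    ((1 + single i j 1) * N : Matrix n n R) k = N k := by
  ext b
  simp [add_mul, single_mul_apply_of_ne _ _ _ _ _ hk]

section Ordered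

variable [Semiring R] [PartialOrder R] [IsOrderedRing R]

lemma one_add_single_mul_row_le {N : Matrix n n R} (hN : ∀ a b, 0 ≤ N a b) {i j : n}
    (hij : i ≠ j) :
    ((1 + single i j 1) * N : Matrix n n R) j ≤ ((1 + single i j 1) * N : Matrix n n R) i := by
  rw [one_add_single_mul_row_self, one_add_single_mul_row_of_ne hij.symm]
  exact le_add_of_nonneg_left (hN i)

lemma IsNonnegElementary.apply_nonneg {A : Matrix n n R} (hA : A.IsNonnegElementary)
    (i j : n) : 0 ≤ A i j := by
  rcases hA with ⟨p, rfl⟩ | ⟨a, b, -, rfl⟩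
  · rw [permMatrixHom_apply_apply]
    split_ifs <;> norm_num
  · rw [add_apply, one_apply, single_apply]
    split_ifs <;> norm_num

lemma list_prod_apply_nonneg {L : List (Matrix n n R)} (hL : ∀ A ∈ L, A.IsNonnegElementary)
    (i j : n) : 0 ≤ L.prod i j :=
  L.prod_induction (fun N => ∀ i j, 0 ≤ N i j) (fun _ _ => mul_apply_nonneg)
    (fun i j => by rw [one_apply]; split_ifs <;> norm_num)
    (fun A hA => (hL A hA).apply_nonneg) i j

lemma list_prod_eq_permMatrixHom_or_row_le {L : List (Matrix n n R)}
    (hL : ∀ A ∈ L, A.IsNonnegElementary) :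
    (∃ p : Perm n, L.prod = permMatrixHom p) ∨ ∃ i j, i ≠ j ∧ L.prod j ≤ L.prod i := by
  induction L with
  | nil => exact .inl ⟨1, by simp⟩
  | cons A L ih =>
    rw [List.forall_mem_cons] at hL
    rw [List.prod_cons]
    rcases hL.1 with ⟨p, rfl⟩ | ⟨i, j, hij, rfl⟩
    · rcases ih hL.2 with ⟨q, hq⟩ | ⟨i, j, hij, hle⟩
      · exact .inl ⟨p * q, by rw [hq, map_mul]⟩
      · refine .inr ⟨p i, p j, p.injective.ne hij, ?_⟩
        rw [permMatrixHom_mul_row, permMatrixHom_mul_row]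
        simpa using hle
    · exact .inr ⟨i, j, hij, one_add_single_mul_row_le (list_prod_apply_nonneg hL.2) hij⟩

end Ordered

end Matrix

open Matrix

lemma IsElem3.isNonnegElementary {A : Matrix (Fin 3) (Fin 3) ℤ} (hA : IsElem3 A) :
    A.IsNonnegElementary := by
  rcases hA with ⟨p, rfl⟩ | h
  · exact .inl ⟨p, by ext i j; rw [permMatrixHom_apply_apply, of_apply]⟩
  · exact .inr h

/-- [[3,0,1],[0,2,1],[1,1,1]] is not a finite product of
non-negative elementary matrices. -/
theorem stmt_9 :
    ¬ ∃ L : List (Matrix (Fin 3) (Fin 3) ℤ),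
      (∀ A ∈ L, IsElem3 A) ∧
      L.prod = (!![3, 0, 1; 0, 2, 1; 1, 1, 1] : Matrix (Fin 3) (Fin 3) ℤ) := by
  rintro ⟨L, hL, hprod⟩
  rcases list_prod_eq_permMatrixHom_or_row_le fun A hA => (hL A hA).isNonnegElementary with
    ⟨p, hp⟩ | ⟨i, j, hij, hle⟩
  · have h00 := congr_fun (congr_fun (hprod.symm.trans hp) 0) 0
    rw [permMatrixHom_apply_apply] at h00
    split_ifs at h00 <;> simp at h00
  · rw [hprod] at hle
    fin_cases i <;> fin_cases j <;> simp [Pi.le_def, Fin.forall_fin_succ] at hij hle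
end

section
/- Let u, x, v be non-empty positive words over {a,b,c} such that u is not a suffix of u*x. Then for every m ≥ 1, the free group element (u*x*v)*(u*v)⁻¹ iterated m times, i.e., ((uxv)(uv)⁻¹)^m, equals u*x^m*u⁻¹, and this element is not a positive word (its reduced form ends with a negative letter). -/
/-- The positive word associated with a list of letters. -/
def ι (l : List (Fin 3)) : FreeGroup (Fin 3) := (l.map FreeGroup.of).prod

namespace Stmt12Aux

open FreeGroup List

lemma ι_eq_mk (l : List (Fin 3)) : ι l = FreeGroup.mk (l.map (fun i => (i, true))) := by
  induction l with
  | nil => rfl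
  | cons a t ih =>
      simp only [ι, List.map_cons, List.prod_cons] at *
      rw [ih, FreeGroup.of, FreeGroup.mul_mk]
      rfl

lemma ι_append (p q : List (Fin 3)) : ι (p ++ q) = ι p * ι q := by
  simp [ι_eq_mk, FreeGroup.mul_mk]

/-- a word with no cancelling adjacent pair is reduced -/
lemma reduce_eq_self {L : List ((Fin 3) × Bool)}
    (h : List.Chain' (fun a b => ¬(a.1 = b.1 ∧ a.2 = !b.2)) L) :
    FreeGroup.reduce L = L := by
  induction L with
  | nil => rfl
  | cons x L ih =>
      have hL : FreeGroup.reduce L = L := ih h.tail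
      rw [FreeGroup.reduce.cons, hL]
      cases L with
      | nil => rfl
      | cons b t =>
          have hxb := (List.isChain_cons_cons.1 h).1
          simp only [if_neg hxb]

lemma chain'_mono (l : List (Fin 3)) (b : Bool) :
    List.Chain' (fun a c : (Fin 3) × Bool => ¬(a.1 = c.1 ∧ a.2 = !c.2))
      (l.map (fun i => (i, b))) := by
  rw [List.Chain', List.isChain_map]
  induction l with
  | nil => exact List.isChain_nil
  | cons a t ih =>
      cases t with
      | nil => exact List.isChain_singleton a
      | cons c s => exact List.isChain_cons_cons.2 ⟨by simp, ih⟩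

lemma last_neg (l : List (Fin 3)) (hl : l ≠ []) :
    ∃ i, ((l.map fun i => (i, false)).getLast? = some (i, false)) := by
  obtain ⟨j, hj⟩ := Option.isSome_iff_exists.1 (List.getLast?_isSome.2 hl)
  exact ⟨j, by rw [List.getLast?_map, hj]; rfl⟩

lemma invRev_map_true (l : List (Fin 3)) :
    FreeGroup.invRev (l.map (fun i => (i, true))) = l.reverse.map (fun i => (i, false)) := by
  simp [FreeGroup.invRev, List.map_reverse, Function.comp_def]

/-- key lemma: the reduced form of ι P * (ι Q)⁻¹ ends with a negative letter when Q is not a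
suffix of P. -/
lemma key : ∀ Q P : List (Fin 3), ¬ (Q <:+ P) →
    ∃ i : Fin 3, (ι P * (ι Q)⁻¹).toWord.getLast? = some (i, false) := by
  intro Q
  induction Q using List.reverseRecOn with
  | nil => intro P h; exact absurd (List.nil_suffix (l := P)) h
  | append_singleton Q' c ih =>
      intro P h
      rcases P.eq_nil_or_concat with rfl | ⟨P', d, rfl⟩
      · -- P = []
        have hw : ι ([] : List (Fin 3)) * (ι (Q' ++ [c]))⁻¹ =
            FreeGroup.mk ((Q' ++ [c]).reverse.map (fun i => (i, false))) := by
          rw [ι_eq_mk, ι_eq_mk, FreeGroup.inv_mk, invRev_map_true]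
          simp [FreeGroup.mul_mk]
        rw [hw, FreeGroup.toWord_mk, reduce_eq_self (chain'_mono _ _)]
        exact last_neg _ (by simp)
      · rw [List.concat_eq_append] at h ⊢
        by_cases hdc : d = c
        · subst hdc
          have hw : ι (P' ++ [d]) * (ι (Q' ++ [d]))⁻¹ = ι P' * (ι Q')⁻¹ := by
            rw [ι_append, ι_append]
            group
          rw [hw]
          refine ih P' ?_
          rintro ⟨t, rfl⟩
          exact h ⟨t, by simp⟩
        · -- last letters differ: the concatenated word is reduced
          have hw : ι (P' ++ [d]) * (ι (Q' ++ [c]))⁻¹ =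
              FreeGroup.mk ((P' ++ [d]).map (fun i => (i, true)) ++
                (Q' ++ [c]).reverse.map (fun i => (i, false))) := by
            rw [ι_eq_mk, ι_eq_mk, FreeGroup.inv_mk, invRev_map_true, FreeGroup.mul_mk]
          have hred : FreeGroup.reduce ((P' ++ [d]).map (fun i => (i, true)) ++
                (Q' ++ [c]).reverse.map (fun i => (i, false))) =
              ((P' ++ [d]).map (fun i => (i, true)) ++
                (Q' ++ [c]).reverse.map (fun i => (i, false))) := by
            refine reduce_eq_self (List.isChain_append.2 ⟨chain'_mono _ _, chain'_mono _ _, ?_⟩)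
            intro a ha b hb
            rw [List.getLast?_map, List.getLast?_concat] at ha
            rw [List.head?_map] at hb
            simp only [List.reverse_append, List.reverse_cons, List.reverse_nil,
              List.nil_append, List.cons_append, List.head?_cons] at hb
            simp only [Option.map_some, Option.mem_def, Option.some.injEq] at ha hb
            subst ha
            subst hb
            simp [hdc]
          rw [hw, FreeGroup.toWord_mk, hred, List.getLast?_append_of_ne_nil _ (by simp)]
          exact last_neg _ (by simp)

lemma not_pos {w : FreeGroup (Fin 3)} {i : Fin 3}
    (hw : w.toWord.getLast? = some (i, false)) : ¬ ∃ l : List (Fin 3), w = ι l := by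
  rintro ⟨l, rfl⟩
  rw [ι_eq_mk, FreeGroup.toWord_mk, reduce_eq_self (chain'_mono _ _),
    List.getLast?_map] at hw
  cases hl : l.getLast? with
  | none => rw [hl] at hw; simp at hw
  | some j => rw [hl] at hw; simp at hw

lemma flatten_comm (X : List (Fin 3)) (n : ℕ) :
    (List.replicate n X).flatten ++ X = X ++ (List.replicate n X).flatten := by
  induction n with
  | zero => simp
  | succ n ih => simp only [List.replicate_succ, List.flatten_cons, List.append_assoc, ih]

lemma reverse_flatten (X : List (Fin 3)) (n : ℕ) :
    ((List.replicate n X).flatten).reverse = (List.replicate n X.reverse).flatten := by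
  induction n with
  | zero => simp
  | succ n ih =>
      rw [List.replicate_succ, List.flatten_cons, List.reverse_append, ih,
        List.replicate_succ, List.flatten_cons, flatten_comm]

lemma ι_pow (x : List (Fin 3)) (m : ℕ) :
    (ι x) ^ m = ι ((List.replicate m x).flatten) := by
  induction m with
  | zero => simp [ι]
  | succ m ih =>
      rw [pow_succ', ih, List.replicate_succ, List.flatten_cons, ι_append]

lemma pref (X : List (Fin 3)) (m : ℕ) (hm : 1 ≤ m) :
    ∀ n : ℕ, ∀ U : List (Fin 3), U.length ≤ n →
      U <+: (List.replicate m X).flatten ++ U → U <+: X ++ U := by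
  intro n
  induction n with
  | zero =>
      intro U hU _
      rw [List.eq_nil_of_length_eq_zero (Nat.le_zero.1 hU)]
      exact List.nil_prefix
  | succ n ih =>
      intro U hlen hpre
      by_cases hX : X = []
      · subst hX; simpa using List.prefix_refl U
      obtain ⟨m', rfl⟩ : ∃ m', m = m' + 1 := ⟨m - 1, by omega⟩
      by_cases hle : U.length ≤ X.length
      · -- U is a prefix of X
        rw [List.replicate_succ, List.flatten_cons, List.append_assoc] at hpre
        have hU : U = X.take U.length := by
          have := List.prefix_iff_eq_take.1 hpre
          rwa [List.take_append, Nat.sub_eq_zero_of_le hle,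
            List.take_zero, List.append_nil] at this
        exact (hU ▸ (List.take_prefix _ _)).trans (X.prefix_append U)
      · push_neg at hle
        have hXU : X <+: U := by
          refine List.prefix_of_prefix_length_le ?_ hpre (le_of_lt hle)
          exact ⟨(List.replicate m' X).flatten ++ U, by
            rw [List.replicate_succ, List.flatten_cons, List.append_assoc]⟩
        obtain ⟨U', rfl⟩ := hXU
        have e : (List.replicate (m' + 1) X).flatten ++ (X ++ U') =
            X ++ ((List.replicate (m' + 1) X).flatten ++ U') := by
          rw [← List.append_assoc, flatten_comm, List.append_assoc]
        rw [e] at hpre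
        have hpre' : U' <+: (List.replicate (m' + 1) X).flatten ++ U' :=
          (List.prefix_append_right_inj X).1 hpre
        have hlen' : U'.length ≤ n := by
          have hX1 : 1 ≤ X.length := List.length_pos_iff.2 hX
          simp only [List.length_append] at hlen
          omega
        exact (List.prefix_append_right_inj X).2 (ih U' hlen' hpre')

lemma not_suffix (u x : List (Fin 3)) (m : ℕ) (hm : 1 ≤ m)
    (hsuf : ¬ ∃ t : List (Fin 3), u ++ x = t ++ u) :
    ¬ (u <:+ u ++ (List.replicate m x).flatten) := by
  intro hs
  have h1 : u.reverse <+: (u ++ (List.replicate m x).flatten).reverse :=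
    List.reverse_prefix.2 hs
  rw [List.reverse_append, reverse_flatten] at h1
  have h2 : u.reverse <+: x.reverse ++ u.reverse :=
    pref x.reverse m hm u.reverse.length u.reverse le_rfl h1
  have h3 : u <:+ u ++ x := by
    have := List.reverse_prefix.1 (by simpa using h2 : (u.reverse).reverse.reverse <+:
      ((u ++ x).reverse).reverse.reverse)
    simpa using this
  obtain ⟨t, ht⟩ := h3
  exact hsuf ⟨t, ht.symm⟩

end Stmt12Aux

open Stmt12Aux in
/-- if u is not a suffix of u*x then ((uxv)(uv)⁻¹)^m = u*x^m*u⁻¹,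
and this element is not positive: its reduced form ends with a negative letter. -/
theorem stmt_12 (u x v : List (Fin 3))
    (hu : u ≠ []) (hx : x ≠ []) (hv : v ≠ [])
    (hsuf : ¬ ∃ t : List (Fin 3), u ++ x = t ++ u) :
    ∀ m : ℕ, 1 ≤ m →
      (ι (u ++ x ++ v) * (ι (u ++ v))⁻¹) ^ m
          = ι u * (ι x) ^ m * (ι u)⁻¹ ∧
      (¬ ∃ l : List (Fin 3), ι u * (ι x) ^ m * (ι u)⁻¹ = ι l) ∧
      (∃ i : Fin 3,
        (ι u * (ι x) ^ m * (ι u)⁻¹).toWord.getLast? = some (i, false)) := by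
  intro m hm
  have hbase : ι (u ++ x ++ v) * (ι (u ++ v))⁻¹ = ι u * ι x * (ι u)⁻¹ := by
    rw [ι_append, ι_append, ι_append]
    group
  have heq : (ι (u ++ x ++ v) * (ι (u ++ v))⁻¹) ^ m = ι u * (ι x) ^ m * (ι u)⁻¹ := by
    rw [hbase, conj_pow]
  have hw : ι u * (ι x) ^ m * (ι u)⁻¹ =
      ι (u ++ (List.replicate m x).flatten) * (ι u)⁻¹ := by
    rw [ι_append, ι_pow]
  obtain ⟨i, hi⟩ := key u (u ++ (List.replicate m x).flatten) (not_suffix u x m hm hsuf)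
  rw [← hw] at hi
  exact ⟨heq, not_pos hi, ⟨i, hi⟩⟩
end

section
/- The substitution σ on {a,b,c} given by σ(a) = a*b, σ(b) = a*c*b, σ(c) = a*c*c satisfies: I_{a⁻¹} ∘ σ equals the composition π ∘ g₁ ∘ g₂ ∘ g₂ ∘ g₃, where π(a)=b, π(b)=c, π(c)=a; g₁(a)=a*c, g₁(b)=b, g₁(c)=c; g₂(a)=a, g₂(b)=b, g₂(c)=b*c; g₃(a)=a, g₃(b)=b*a, g₃(c)=c (as endomorphisms of the free group on {a,b,c}). -/
theorem FreeGroup.conj_apply_eq_of_forall_of {α G : Type*} [Group G] {f g : FreeGroup α →* G}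
    (x : G) (h : ∀ i, x * f (of i) * x⁻¹ = g (of i)) (u : FreeGroup α) :
    x * f u * x⁻¹ = g u :=
  DFunLike.congr_fun (ext_hom (f := (MulAut.conj x).toMonoidHom.comp f) (g := g) h) u

/-- for σ = (ab, acb, acc), I_{a⁻¹} ∘ σ = π ∘ g₁ ∘ g₂ ∘ g₂ ∘ g₃ where
π = (b,c,a), g₁ = (ac,b,c), g₂ = (a,b,bc), g₃ = (a,ba,c). -/
theorem stmt_14
    (a b c : FreeGroup (Fin 3))
    (ha : a = FreeGroup.of 0) (hb : b = FreeGroup.of 1) (hc : c = FreeGroup.of 2)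
    (σ π g₁ g₂ g₃ : FreeGroup (Fin 3) →* FreeGroup (Fin 3))
    (hσ : σ = FreeGroup.lift ![a * b, a * c * b, a * c * c])
    (hπ : π = FreeGroup.lift ![b, c, a])
    (hg₁ : g₁ = FreeGroup.lift ![a * c, b, c])
    (hg₂ : g₂ = FreeGroup.lift ![a, b, b * c])
    (hg₃ : g₃ = FreeGroup.lift ![a, b * a, c]) :
    ∀ u : FreeGroup (Fin 3),
      a⁻¹ * σ u * (a⁻¹)⁻¹ = (π.comp (g₁.comp (g₂.comp (g₂.comp g₃)))) u := by
  subst ha hb hc hσ hπ hg₁ hg₂ hg₃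
  refine FreeGroup.conj_apply_eq_of_forall_of _ fun i => ?_
  fin_cases i <;> simp [mul_assoc]
end

section
/- Let u, v, x, y be non-empty positive words over {a,b,c} with: the first letters of u and y differ; the last letters of x and v differ; x is not a prefix of v and v is not a prefix of x; y is not a suffix of u and u is not a suffix of y. Set w₁ = u*x, w₂ = u*v, w₃ = y*v. Then for all i, j, k ∈ {1,2,3} with i ≠ j, the free group element wᵢ*wⱼ⁻¹ is not the identity and its reduced form has length at least 2. -/
namespace List

variable {α : Type*}

theorem suffix_append_left_inj {l₁ l₂ : List α} (l : List α) :
    l₁ ++ l <:+ l₂ ++ l ↔ l₁ <:+ l₂ :=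
  exists_congr fun r => by rw [← append_assoc, append_left_inj]

theorem not_suffix_of_getLast?_ne {l₁ l₂ : List α} (h : l₁ ≠ [])
    (hl : l₁.getLast? ≠ l₂.getLast?) : ¬ l₁ <:+ l₂ := fun hs =>
  hl (by rw [getLast?_eq_some_getLast h, getLast?_eq_some_getLast (hs.ne_nil h), hs.getLast h])

end List

namespace FreeGroup

variable {α : Type*}

theorem prod_map_of_eq_mk (l : List α) : (l.map of).prod = mk (l.map (·, true)) := by
  induction l with
  | nil => rfl
  | cons a l ih => rw [List.map_cons, List.prod_cons, ih, of, mul_mk]; rfl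

theorem isReduced_map_const (l : List α) (b : Bool) : IsReduced (l.map (·, b)) :=
  (List.isChain_map _).2 (List.pairwise_of_forall fun _ _ _ => rfl).isChain

theorem isReduced_map_true_append_map_false {A B : List α} (h : A.getLast? ≠ B.head?) :
    IsReduced (A.map (·, true) ++ B.map (·, false)) := by
  refine List.isChain_append.2 ⟨isReduced_map_const A true, isReduced_map_const B false, ?_⟩
  simp only [List.getLast?_map, List.head?_map, Option.mem_map]
  rintro _ ⟨a, ha, rfl⟩ _ ⟨b, hb, rfl⟩ rfl
  exact absurd (ha.trans hb.symm) h

variable [DecidableEq α]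

theorem toWord_prod_map_of_mul_inv {A B : List α} (h : A.getLast? ≠ B.getLast?) :
    ((A.map of).prod * (B.map of).prod⁻¹).toWord
      = A.map (·, true) ++ B.reverse.map (·, false) := by
  have hinv : invRev (B.map (·, true)) = B.reverse.map (·, false) := by
    simp [invRev, List.map_reverse, Function.comp_def]
  rw [prod_map_of_eq_mk, prod_map_of_eq_mk, inv_mk, mul_mk, toWord_mk, hinv]
  exact (isReduced_map_true_append_map_false (by rwa [List.head?_reverse])).reduce_eq

theorem two_le_length_toWord_prod_map_of_mul_inv {A B : List α} (hA : ¬ A <:+ B)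
    (hB : ¬ B <:+ A) : 2 ≤ ((A.map of).prod * (B.map of).prod⁻¹).toWord.length := by
  induction A using List.reverseRecOn generalizing B with
  | nil => exact absurd List.nil_suffix hA
  | append_singleton A c ih =>
    induction B using List.reverseRecOn with
    | nil => exact absurd List.nil_suffix hB
    | append_singleton B d _ =>
      by_cases hcd : c = d
      · subst hcd
        have hcancel : ((A ++ [c]).map of).prod * ((B ++ [c]).map of).prod⁻¹
            = (A.map of).prod * (B.map of).prod⁻¹ := by
          simp only [List.map_append, List.prod_append, List.map_singleton, List.prod_singleton]
          group
        rw [hcancel]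
        exact ih (mt (List.suffix_append_left_inj _).2 hA) (mt (List.suffix_append_left_inj _).2 hB)
      · rw [toWord_prod_map_of_mul_inv (by simpa using hcd)]
        simp only [List.length_append, List.length_map, List.length_reverse, List.length_singleton]
        omega

end FreeGroup

theorem stmt_19_general (u v x y : List (Fin 3))
    (hv : v ≠ []) (hx : x ≠ [])
    (h2 : x.getLast? ≠ v.getLast?)
    (h5 : ¬ y <:+ u) (h6 : ¬ u <:+ y)
    (W : Fin 3 → FreeGroup (Fin 3))
    (hW : W = ![ι (u ++ x), ι (u ++ v), ι (y ++ v)]) :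
    ∀ i j : Fin 3, i ≠ j →
      W i * (W j)⁻¹ ≠ 1 ∧ 2 ≤ (W i * (W j)⁻¹).toWord.length := by
  set L : Fin 3 → List (Fin 3) := ![u ++ x, u ++ v, y ++ v]
  have hWL : ∀ i, W i = ι (L i) := by
    subst hW; intro i; fin_cases i <;> rfl
  have hxv : ∀ s t : List (Fin 3), ¬ s ++ x <:+ t ++ v ∧ ¬ t ++ v <:+ s ++ x := by
    intro s t
    rw [← List.getLast?_append_of_ne_nil s hx, ← List.getLast?_append_of_ne_nil t hv] at h2
    exact ⟨List.not_suffix_of_getLast?_ne (by simp [hx]) h2,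
      List.not_suffix_of_getLast?_ne (by simp [hv]) (Ne.symm h2)⟩
  have hL : ∀ i j, i ≠ j → ¬ L i <:+ L j := by
    intro i j hij
    fin_cases i <;> fin_cases j
    all_goals first
      | exact absurd rfl hij
      | exact (hxv _ _).1
      | exact (hxv _ _).2
      | exact mt (List.suffix_append_left_inj v).1 h6
      | exact mt (List.suffix_append_left_inj v).1 h5
  intro i j hij
  have hlen : 2 ≤ (ι (L i) * (ι (L j))⁻¹).toWord.length :=
    FreeGroup.two_le_length_toWord_prod_map_of_mul_inv (hL i j hij) (hL j i hij.symm)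
  rw [hWL, hWL]
  exact ⟨fun h => by simp [h] at hlen, hlen⟩

/-- under the cancellation-control hypotheses on u, v, x, y, the words
w₁ = ux, w₂ = uv, w₃ = yv satisfy: wᵢ wⱼ⁻¹ ≠ 1 and has reduced length ≥ 2 for i ≠ j. -/
theorem stmt_19 (u v x y : List (Fin 3))
    (hu : u ≠ []) (hv : v ≠ []) (hx : x ≠ []) (hy : y ≠ [])
    (h1 : u.head? ≠ y.head?) (h2 : x.getLast? ≠ v.getLast?)
    (h3 : ¬ x <+: v) (h4 : ¬ v <+: x)
    (h5 : ¬ y <:+ u) (h6 : ¬ u <:+ y)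
    (W : Fin 3 → FreeGroup (Fin 3))
    (hW : W = ![ι (u ++ x), ι (u ++ v), ι (y ++ v)]) :
    ∀ i j : Fin 3, i ≠ j →
      W i * (W j)⁻¹ ≠ 1 ∧ 2 ≤ (W i * (W j)⁻¹).toWord.length :=
  stmt_19_general u v x y hv hx h2 h5 h6 W hW
end
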